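/- arXiv:math/0701603 — 2 statements merged into one kernel-verified Lean document; each statement's English description precedes it below -/
import Mathlib

section
/- Let 3 ≤ k ≤ n+1, 1 ≤ h ≤ k−1, gcd(h,k)=1, and write n+1 = kq + r with 0 ≤ r ≤ k−1. Then the multiplicity of cos(hπ/k) as an eigenvalue of the Markov operator of the edge lamplighter random walk on the discrete circle C_n equals: n·(2^n − 2^{r−1})/(2^k − 1) when 2 ≤ r ≤ k−1; n·(2^n − 1)/(2^k − 1) when r = 1 and hq is odd; n·(2^n − 1)/(2^k − 1) + 2 when r = 1 and hq is even; and n·(2^n + 2^{k−1} − 1)/(2^k − 1) when r = 0. -/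
noncomputable section

/-- The edges of the discrete circle `C_n` are indexed by `ZMod n`: edge `i` is
`{i, i+1}`. `cycDelta n i` is the indicator lamp configuration of the edge `i`. -/
def cycDelta (n : ℕ) (i : ZMod n) : ZMod n → ZMod 2 := fun j => if j = i then 1 else 0

/-- The Markov operator of the edge lamplighter random walk on the discrete circle
`C_n` (lamps on the edges, edge `i = {i,i+1}` indexed by `i : ZMod n`), acting on the
`2^n·n`-dimensional space of complex functions on `𝓛(E_n) = {0,1}^{E_n} × C_n`:
from `(ω,x)` the lamplighter moves to `x+1` or `x−1` with equal probability and
randomizes the lamp on the traversed edge. -/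
def cycLampM (n : ℕ) :
    (((ZMod n → ZMod 2) × ZMod n) → ℂ) →ₗ[ℂ] (((ZMod n → ZMod 2) × ZMod n) → ℂ) where
  toFun F := fun p =>
    (1 / 4 : ℂ) * (F (p.1, p.2 + 1) + F (p.1 + cycDelta n p.2, p.2 + 1)
      + F (p.1, p.2 - 1) + F (p.1 + cycDelta n (p.2 - 1), p.2 - 1))
  map_add' F₁ F₂ := by funext p; simp only [Pi.add_apply]; ring
  map_smul' c F := by funext p; simp only [Pi.smul_apply, RingHom.id_apply, smul_eq_mul]; ring

namespace CycLamp
open Finset Module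

def sgn : ZMod 2 → ℂ := fun a => if a = 0 then 1 else -1

lemma sgn_zero : sgn 0 = 1 := rfl

lemma sgn_add (a b : ZMod 2) : sgn (a + b) = sgn a * sgn b := by
  have h11 : (1 + 1 : ZMod 2) = 0 := rfl
  rcases (by decide : ∀ x : ZMod 2, x = 0 ∨ x = 1) a with rfl | rfl <;>
    rcases (by decide : ∀ x : ZMod 2, x = 0 ∨ x = 1) b with rfl | rfl <;> simp +decide [sgn, h11]

lemma sum_zmod2 (g : ZMod 2 → ℂ) : ∑ s, g s = g 0 + g 1 := by
  have h : (univ : Finset (ZMod 2)) = {0, 1} := by decide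
  rw [h, Finset.sum_insert (by decide), Finset.sum_singleton]

variable (n : ℕ) [NeZero n]

def chi (S ω : ZMod n → ZMod 2) : ℂ := ∏ j, sgn (S j * ω j)

lemma chi_add_right (S ω ω' : ZMod n → ZMod 2) :
    chi n S (ω + ω') = chi n S ω * chi n S ω' := by
  rw [chi, chi, chi, ← Finset.prod_mul_distrib]
  exact Finset.prod_congr rfl fun j _ => by rw [Pi.add_apply, mul_add, sgn_add]

lemma chi_mul_self (S T ω : ZMod n → ZMod 2) :
    chi n S ω * chi n T ω = chi n (S + T) ω := by
  rw [chi, chi, chi, ← Finset.prod_mul_distrib]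
  exact Finset.prod_congr rfl fun j _ => by rw [Pi.add_apply, add_mul, sgn_add]

lemma chi_delta (S : ZMod n → ZMod 2) (e : ZMod n) :
    chi n S (cycDelta n e) = sgn (S e) := by
  rw [chi]
  rw [Finset.prod_eq_single e]
  · simp [cycDelta]
  · intro j _ hj
    simp [cycDelta, hj, sgn_zero]
  · simp

lemma chi_comm (S ω : ZMod n → ZMod 2) : chi n S ω = chi n ω S :=
  Finset.prod_congr rfl fun j _ => by rw [mul_comm]

lemma sum_chi (τ : ZMod n → ZMod 2) :
    ∑ S : ZMod n → ZMod 2, chi n S τ = if τ = 0 then (2 : ℂ) ^ n else 0 := by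
  have key : ∑ S : ZMod n → ZMod 2, chi n S τ = ∏ j : ZMod n, (1 + sgn (τ j)) := by
    have h1 : ∏ j : ZMod n, ∑ s : ZMod 2, sgn (s * τ j)
        = ∑ S ∈ Fintype.piFinset (fun _ : ZMod n => (univ : Finset (ZMod 2))),
            ∏ j : ZMod n, sgn (S j * τ j) :=
      Finset.prod_univ_sum _ _
    rw [Fintype.piFinset_univ] at h1
    rw [show (∑ S : ZMod n → ZMod 2, chi n S τ)
        = ∑ S : ZMod n → ZMod 2, ∏ j : ZMod n, sgn (S j * τ j) from rfl, ← h1]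
    exact Finset.prod_congr rfl fun j _ => by
      rw [sum_zmod2 (fun s => sgn (s * τ j))]; simp [sgn_zero]
  rw [key]
  by_cases h : τ = 0
  · subst h
    simp only [Pi.zero_apply, sgn_zero]
    rw [Finset.prod_const]
    norm_num [ZMod.card]
  · obtain ⟨j, hj⟩ : ∃ j, τ j ≠ 0 := by
      by_contra hc
      push_neg at hc
      exact h (funext hc)
    have hj1 : τ j = 1 := by
      have hz : ∀ a : ZMod 2, a ≠ 0 → a = 1 := by decide
      exact hz _ hj
    rw [if_neg h]
    refine Finset.prod_eq_zero (Finset.mem_univ j) ?_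
    rw [hj1]; norm_num [sgn]

def Aop (S : ZMod n → ZMod 2) : Module.End ℂ (ZMod n → ℂ) where
  toFun f := fun x =>
    (1 / 4 : ℂ) * ((1 + sgn (S x)) * f (x + 1) + (1 + sgn (S (x - 1))) * f (x - 1))
  map_add' f g := by funext x; simp only [Pi.add_apply]; ring
  map_smul' c f := by funext x; simp only [Pi.smul_apply, RingHom.id_apply, smul_eq_mul]; ring

def Dop : Module.End ℂ ((ZMod n → ZMod 2) → ZMod n → ℂ) where
  toFun g := fun S => Aop n S (g S)
  map_add' f g := by funext S; simp
  map_smul' c f := by funext S; simp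

def Phi : ((ZMod n → ZMod 2) → ZMod n → ℂ) →ₗ[ℂ] (((ZMod n → ZMod 2) × ZMod n) → ℂ) where
  toFun g := fun p => ∑ S, chi n S p.1 * g S p.2
  map_add' g₁ g₂ := by
    funext p
    simp only [Pi.add_apply, mul_add, Finset.sum_add_distrib]
  map_smul' c g := by
    funext p
    simp only [Pi.smul_apply, smul_eq_mul, RingHom.id_apply]
    rw [Finset.mul_sum]
    exact Finset.sum_congr rfl fun S _ => by ring

def PhiInv : (((ZMod n → ZMod 2) × ZMod n) → ℂ) →ₗ[ℂ] ((ZMod n → ZMod 2) → ZMod n → ℂ) where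
  toFun F := fun S x => ((2 : ℂ) ^ n)⁻¹ * ∑ ω, chi n S ω * F (ω, x)
  map_add' F₁ F₂ := by
    funext S x
    simp only [Pi.add_apply, mul_add, Finset.sum_add_distrib]
  map_smul' c F := by
    funext S x
    simp only [Pi.smul_apply, smul_eq_mul, RingHom.id_apply, Finset.mul_sum]
    exact Finset.sum_congr rfl fun ω _ => by ring

lemma two_pow_ne : ((2 : ℂ) ^ n) ≠ 0 := pow_ne_zero _ two_ne_zero

lemma pi_zmod2_eq_iff (S T : ZMod n → ZMod 2) : S + T = 0 ↔ T = S := by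
  have h2 : ∀ a b : ZMod 2, a + b = 0 ↔ b = a := by decide
  constructor
  · intro h; funext j; exact (h2 _ _).1 (congrFun h j)
  · intro h; subst h; funext j; exact (h2 _ _).2 rfl

lemma phiInv_phi : (PhiInv n).comp (Phi n) = LinearMap.id := by
  apply LinearMap.ext
  intro g
  funext S x
  simp only [LinearMap.comp_apply, LinearMap.id_apply, PhiInv, Phi, LinearMap.coe_mk,
    AddHom.coe_mk]
  have : ∀ ω, chi n S ω * ∑ T, chi n T ω * g T x = ∑ T, chi n (S + T) ω * g T x := by
    intro ω
    rw [Finset.mul_sum]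
    exact Finset.sum_congr rfl fun T _ => by rw [← mul_assoc, chi_mul_self]
  simp only [this]
  rw [Finset.sum_comm]
  have : ∀ T, ∑ ω, chi n (S + T) ω * g T x = (if T = S then (2:ℂ)^n else 0) * g T x := by
    intro T
    rw [← Finset.sum_mul]
    congr 1
    rw [show ∑ ω, chi n (S + T) ω = ∑ ω, chi n ω (S + T) from
      Finset.sum_congr rfl fun ω _ => chi_comm n _ _]
    rw [sum_chi]
    simp only [pi_zmod2_eq_iff]
  simp only [this, ite_mul, zero_mul]
  rw [Finset.sum_ite_eq' univ S (fun T => (2:ℂ)^n * g T x)]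
  simp only [Finset.mem_univ, if_pos]
  rw [← mul_assoc, inv_mul_cancel₀ (two_pow_ne n), one_mul]

lemma phi_phiInv : (Phi n).comp (PhiInv n) = LinearMap.id := by
  apply LinearMap.ext
  intro F
  funext p
  obtain ⟨ω, x⟩ := p
  simp only [LinearMap.comp_apply, LinearMap.id_apply, PhiInv, Phi, LinearMap.coe_mk,
    AddHom.coe_mk]
  have h1 : ∀ S : ZMod n → ZMod 2, chi n S ω * (((2:ℂ)^n)⁻¹ * ∑ ω', chi n S ω' * F (ω', x))
      = ((2:ℂ)^n)⁻¹ * ∑ ω', chi n S (ω + ω') * F (ω', x) := by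
    intro S
    rw [Finset.mul_sum, Finset.mul_sum, Finset.mul_sum, ← Finset.mul_sum]
    congr 1
    rw [Finset.mul_sum]
    exact Finset.sum_congr rfl fun ω' _ => by rw [chi_add_right]; ring
  simp only [h1]
  rw [← Finset.mul_sum, Finset.sum_comm]
  have h2 : ∀ ω' : ZMod n → ZMod 2,
      ∑ S : ZMod n → ZMod 2, chi n S (ω + ω') * F (ω', x)
        = (if ω' = ω then (2:ℂ)^n else 0) * F (ω', x) := by
    intro ω'
    rw [← Finset.sum_mul, sum_chi]
    simp only [pi_zmod2_eq_iff]
  simp only [h2, ite_mul, zero_mul]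
  rw [Finset.sum_ite_eq' univ ω (fun ω' => (2:ℂ)^n * F (ω', x))]
  simp only [Finset.mem_univ, if_pos]
  rw [← mul_assoc, inv_mul_cancel₀ (two_pow_ne n), one_mul]

def PhiEquiv : ((ZMod n → ZMod 2) → ZMod n → ℂ) ≃ₗ[ℂ] (((ZMod n → ZMod 2) × ZMod n) → ℂ) :=
  LinearEquiv.ofLinear (Phi n) (PhiInv n) (phi_phiInv n) (phiInv_phi n)

lemma intertwine (g : (ZMod n → ZMod 2) → ZMod n → ℂ) :
    cycLampM n (Phi n g) = Phi n (Dop n g) := by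
  funext p
  obtain ⟨ω, x⟩ := p
  simp only [cycLampM, Phi, Dop, Aop, LinearMap.coe_mk, AddHom.coe_mk]
  have hd : ∀ (e : ZMod n) (y : ZMod n),
      ∑ S : ZMod n → ZMod 2, chi n S (ω + cycDelta n e) * g S y
        = ∑ S : ZMod n → ZMod 2, chi n S ω * sgn (S e) * g S y :=
    fun e y => Finset.sum_congr rfl fun S _ => by rw [chi_add_right, chi_delta]
  rw [hd, hd]
  rw [← Finset.sum_add_distrib, ← Finset.sum_add_distrib, ← Finset.sum_add_distrib,
    Finset.mul_sum]
  exact Finset.sum_congr rfl fun S _ => by ring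

lemma phi_injective : Function.Injective (Phi n) :=
  Function.LeftInverse.injective (g := PhiInv n) fun a => DFunLike.congr_fun (phiInv_phi n) a

lemma eigenspace_map (μ : ℂ) :
    Module.End.eigenspace (cycLampM n) μ
      = Submodule.map (Phi n) (Module.End.eigenspace (Dop n) μ) := by
  ext F
  rw [Module.End.mem_eigenspace_iff, Submodule.mem_map]
  constructor
  · intro hF
    have hPP : (Phi n) ((PhiInv n) F) = F := DFunLike.congr_fun (phi_phiInv n) F
    refine ⟨PhiInv n F, ?_, hPP⟩
    rw [Module.End.mem_eigenspace_iff]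
    apply phi_injective n
    rw [← intertwine n, map_smul, hPP, hF]
  · rintro ⟨g, hg, rfl⟩
    rw [Module.End.mem_eigenspace_iff] at hg
    rw [intertwine n, hg, map_smul]

def eigPiEquiv (μ : ℂ) : (Module.End.eigenspace (Dop n) μ) ≃ₗ[ℂ]
    ((S : ZMod n → ZMod 2) → Module.End.eigenspace (Aop n S) μ) where
  toFun g S := ⟨g.1 S, by
    have h := Module.End.mem_eigenspace_iff.mp g.2
    rw [Module.End.mem_eigenspace_iff]
    exact congrFun h S⟩
  map_add' _ _ := rfl
  map_smul' _ _ := rfl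
  invFun h := ⟨fun S => (h S).1, by
    rw [Module.End.mem_eigenspace_iff]
    funext S
    exact Module.End.mem_eigenspace_iff.mp (h S).2⟩
  left_inv g := rfl
  right_inv h := rfl

lemma eigen_decomp (μ : ℂ) :
    finrank ℂ (Module.End.eigenspace (cycLampM n) μ)
      = ∑ S : ZMod n → ZMod 2, finrank ℂ (Module.End.eigenspace (Aop n S) μ) := by
  rw [eigenspace_map n μ]
  rw [← LinearEquiv.finrank_eq
    (Submodule.equivMapOfInjective (Phi n) (phi_injective n) (Module.End.eigenspace (Dop n) μ))]
  rw [LinearEquiv.finrank_eq (eigPiEquiv n μ)]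
  exact Module.finrank_pi_fintype ℂ

section Trig
open Real

def useq (k h : ℕ) : ℕ → ℝ := fun m =>
  Real.sin ((m + 1) * (h * Real.pi / k)) / Real.sin (h * Real.pi / k)

variable {k h : ℕ}

lemma theta_pos (hk : 0 < k) (hh : 0 < h) : 0 < (h : ℝ) * Real.pi / k := by
  apply div_pos (mul_pos _ Real.pi_pos) (by exact_mod_cast hk)
  exact_mod_cast hh

lemma theta_lt (hk : 0 < k) (hhk : h < k) : (h : ℝ) * Real.pi / k < Real.pi := by
  rw [div_lt_iff₀ (by exact_mod_cast hk)]
  have : (h : ℝ) < k := by exact_mod_cast hhk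
  nlinarith [Real.pi_pos]

lemma sin_theta_pos (hk : 0 < k) (hh : 0 < h) (hhk : h < k) :
    0 < Real.sin ((h : ℝ) * Real.pi / k) :=
  Real.sin_pos_of_pos_of_lt_pi (theta_pos hk hh) (theta_lt hk hhk)

lemma useq_zero' (hk : 0 < k) (hh : 0 < h) (hhk : h < k) : useq k h 0 = 1 := by
  have hs := ne_of_gt (sin_theta_pos hk hh hhk)
  rw [useq]
  simp only [Nat.cast_zero, zero_add, one_mul]
  exact div_self hs

lemma sin_add_sin_sub (a t : ℝ) :
    Real.sin (a + t) + Real.sin (a - t) = 2 * Real.sin a * Real.cos t := by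
  rw [Real.sin_add, Real.sin_sub]; ring

lemma useq_one' (hk : 0 < k) (hh : 0 < h) (hhk : h < k) :
    useq k h 1 = 2 * Real.cos ((h : ℝ) * Real.pi / k) := by
  rw [useq]
  push_cast
  rw [show ((1:ℝ)+1) * ((h:ℝ) * Real.pi / k) = 2 * ((h:ℝ) * Real.pi / k) by ring,
    Real.sin_two_mul]
  field_simp [ne_of_gt (sin_theta_pos hk hh hhk)]

lemma useq_rec (hk : 0 < k) (hh : 0 < h) (hhk : h < k) (m : ℕ) :
    useq k h (m + 2) = 2 * Real.cos ((h : ℝ) * Real.pi / k) * useq k h (m + 1) - useq k h m := by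
  have hs := ne_of_gt (sin_theta_pos hk hh hhk)
  set t := (h:ℝ) * Real.pi / k with ht
  have h2 := sin_add_sin_sub (((m:ℝ)+2)*t) t
  rw [show ((m:ℝ)+2)*t + t = ((m:ℝ)+2+1)*t by ring,
    show ((m:ℝ)+2)*t - t = ((m:ℝ)+1)*t by ring] at h2
  have key : Real.sin (((m:ℝ)+2+1)*t)
      = 2 * Real.cos t * Real.sin (((m:ℝ)+1+1)*t) - Real.sin (((m:ℝ)+1)*t) := by
    rw [show ((m:ℝ)+1+1) = ((m:ℝ)+2) by ring]
    linarith
  rw [useq, useq, useq]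
  push_cast
  rw [key]
  ring

lemma useq_eq_zero_iff (hk : 0 < k) (hh : 0 < h) (hhk : h < k) (hcop : Nat.gcd h k = 1)
    (m : ℕ) : useq k h m = 0 ↔ k ∣ (m + 1) := by
  have hs := ne_of_gt (sin_theta_pos hk hh hhk)
  rw [useq, div_eq_zero_iff]
  simp only [hs, or_false]
  rw [Real.sin_eq_zero_iff]
  constructor
  · rintro ⟨j, hj⟩
    have hk0 : (k : ℝ) ≠ 0 := by exact_mod_cast hk.ne'
    have hπ : Real.pi ≠ 0 := Real.pi_ne_zero
    have hj' : ((j:ℝ) * k) * Real.pi = ((((m:ℝ))+1) * h) * Real.pi := by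
      field_simp at hj
      linear_combination Real.pi * hj
    have hc := mul_right_cancel₀ hπ hj'
    have : (j : ℝ) * k = ((m + 1) * h : ℕ) := by
      push_cast
      linear_combination hc
    have hz : j * (k : ℤ) = ((m + 1) * h : ℕ) := by exact_mod_cast this
    have hdvd : (k : ℤ) ∣ ((m + 1) * h : ℕ) := Dvd.intro j (by linarith [hz])
    have hdvdn : k ∣ (m + 1) * h := by exact_mod_cast hdvd
    exact (Nat.coprime_comm.mp hcop).dvd_of_dvd_mul_right hdvdn
  · rintro ⟨t, ht⟩
    refine ⟨t * h, ?_⟩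
    have hk0 : (k : ℝ) ≠ 0 := by exact_mod_cast hk.ne'
    have hm : ((m:ℝ) + 1) = (k : ℝ) * t := by exact_mod_cast ht
    push_cast
    rw [hm]
    field_simp

end Trig

section Seg

lemma zcast_val (a : ZMod n) : ((a.val : ℕ) : ZMod n) = a := ZMod.natCast_rightInverse a

variable (S : ZMod n → ZMod 2)

lemma zmod2_ne_zero : ∀ a : ZMod 2, a ≠ 0 → a = 1 := by decide

open scoped Classical in
def segLen (p : ZMod n) : ℕ :=
  if hex : ∃ m : ℕ, 0 < m ∧ S (p + (m : ℕ) - 1) = 1 then Nat.find hex else 0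

lemma segLen_exists {p : ZMod n} (hp : S (p - 1) = 1) :
    ∃ m : ℕ, 0 < m ∧ S (p + (m : ℕ) - 1) = 1 :=
  ⟨n, NeZero.pos n, by rwa [ZMod.natCast_self, add_zero]⟩

lemma segLen_eq_find {p : ZMod n} (hex : ∃ m : ℕ, 0 < m ∧ S (p + (m : ℕ) - 1) = 1) :
    segLen n S p = Nat.find hex := by
  rw [segLen, dif_pos hex]

lemma segLen_pos {p : ZMod n} (hp : S (p - 1) = 1) : 0 < segLen n S p := by
  rw [segLen_eq_find n S (segLen_exists n S hp)]
  exact (Nat.find_spec (segLen_exists n S hp)).1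

lemma segLen_le {p : ZMod n} (hp : S (p - 1) = 1) : segLen n S p ≤ n := by
  rw [segLen_eq_find n S (segLen_exists n S hp)]
  exact Nat.find_le ⟨NeZero.pos n, by rwa [ZMod.natCast_self, add_zero]⟩

lemma segLen_spec {p : ZMod n} (hp : S (p - 1) = 1) :
    S (p + (segLen n S p : ℕ) - 1) = 1 := by
  rw [segLen_eq_find n S (segLen_exists n S hp)]
  exact (Nat.find_spec (segLen_exists n S hp)).2

lemma segLen_min {p : ZMod n} (hp : S (p - 1) = 1) {m : ℕ} (hm : 0 < m)
    (hlt : m < segLen n S p) : S (p + (m : ℕ) - 1) = 0 := by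
  rw [segLen_eq_find n S (segLen_exists n S hp)] at hlt
  have := Nat.find_min (segLen_exists n S hp) hlt
  push_neg at this
  by_contra hc
  exact absurd (zmod2_ne_zero _ hc) (by intro h1; exact absurd (this hm) (by simp [h1]))

lemma exists_start (hS : S ≠ 0) (x : ZMod n) :
    ∃ (p : ZMod n) (m : ℕ), S (p - 1) = 1 ∧ m < segLen n S p ∧ x = p + (m : ℕ) := by
  have hexb : ∃ d : ℕ, S (x - (d : ℕ) - 1) = 1 := by
    obtain ⟨y, hy⟩ : ∃ y, S y ≠ 0 := by
      by_contra hc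
      push_neg at hc
      exact hS (funext hc)
    refine ⟨(x - 1 - y).val, ?_⟩
    rw [zcast_val]
    have : x - (x - 1 - y) - 1 = y := by ring
    rw [this]
    exact zmod2_ne_zero _ hy
  set b := Nat.find hexb with hb
  have hbspec : S (x - (b : ℕ) - 1) = 1 := Nat.find_spec hexb
  have hbmin : ∀ d < b, S (x - (d : ℕ) - 1) ≠ 1 := fun d hd => Nat.find_min hexb hd
  set p := x - (b : ℕ) with hp
  have hp1 : S (p - 1) = 1 := hbspec
  refine ⟨p, b, hp1, ?_, by rw [hp]; ring⟩
  by_contra hc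
  push_neg at hc
  have hL := segLen_pos n S hp1
  have hLb : segLen n S p ≤ b := hc
  have hspec := segLen_spec n S hp1
  set L := segLen n S p with hLdef
  have hcast : ((b - L : ℕ) : ZMod n) = (b : ℕ) - (L : ℕ) := by
    push_cast [Nat.cast_sub hLb]
    ring
  have : p + (L : ℕ) - 1 = x - ((b - L : ℕ) : ℕ) - 1 := by
    rw [hp, hcast]
    ring
  rw [this] at hspec
  exact hbmin (b - L) (by omega) hspec

end Seg

section Eigen

def muC (k h : ℕ) : ℂ := Complex.ofReal (Real.cos ((h : ℝ) * Real.pi / k))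

lemma sgn_coeff_one {a : ZMod 2} (ha : a = 1) : (1:ℂ) + sgn a = 0 := by
  rw [ha]; norm_num [sgn]

lemma sgn_coeff_zero {a : ZMod 2} (ha : a = 0) : (1:ℂ) + sgn a = 2 := by
  rw [ha]; norm_num [sgn]

lemma eigen_point {S : ZMod n → ZMod 2} {f : ZMod n → ℂ} {μ : ℂ}
    (hf : Aop n S f = μ • f) (x : ZMod n) :
    (1/4:ℂ) * ((1 + sgn (S x)) * f (x+1) + (1 + sgn (S (x-1))) * f (x-1)) = μ * f x := by
  have := congrFun hf x
  simpa [Aop, Pi.smul_apply, smul_eq_mul] using this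

lemma eigen_00 {S : ZMod n → ZMod 2} {f : ZMod n → ℂ} {μ : ℂ}
    (hf : Aop n S f = μ • f) {x : ZMod n} (h1 : S x = 0) (h2 : S (x-1) = 0) :
    f (x+1) + f (x-1) = 2 * μ * f x := by
  have H := eigen_point n hf x
  rw [sgn_coeff_zero h1, sgn_coeff_zero h2] at H
  linear_combination 2 * H

lemma eigen_01 {S : ZMod n → ZMod 2} {f : ZMod n → ℂ} {μ : ℂ}
    (hf : Aop n S f = μ • f) {x : ZMod n} (h1 : S x = 0) (h2 : S (x-1) = 1) :
    f (x+1) = 2 * μ * f x := by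
  have H := eigen_point n hf x
  rw [sgn_coeff_zero h1, sgn_coeff_one h2] at H
  linear_combination 2 * H

lemma eigen_10 {S : ZMod n → ZMod 2} {f : ZMod n → ℂ} {μ : ℂ}
    (hf : Aop n S f = μ • f) {x : ZMod n} (h1 : S x = 1) (h2 : S (x-1) = 0) :
    f (x-1) = 2 * μ * f x := by
  have H := eigen_point n hf x
  rw [sgn_coeff_one h1, sgn_coeff_zero h2] at H
  linear_combination 2 * H

lemma eigen_11 {S : ZMod n → ZMod 2} {f : ZMod n → ℂ} {μ : ℂ}
    (hf : Aop n S f = μ • f) {x : ZMod n} (h1 : S x = 1) (h2 : S (x-1) = 1) :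
    μ * f x = 0 := by
  have H := eigen_point n hf x
  rw [sgn_coeff_one h1, sgn_coeff_one h2] at H
  linear_combination -H

variable {k h : ℕ}

lemma useq_one_c (hk : 0 < k) (hh : 0 < h) (hhk : h < k) :
    ((useq k h 1 : ℝ) : ℂ) = 2 * muC k h := by
  rw [useq_one' hk hh hhk, muC]
  push_cast
  ring

lemma useq_rec_c (hk : 0 < k) (hh : 0 < h) (hhk : h < k) (m : ℕ) :
    ((useq k h (m+2) : ℝ) : ℂ) = 2 * muC k h * ((useq k h (m+1) : ℝ) : ℂ)
      - ((useq k h m : ℝ) : ℂ) := by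
  rw [useq_rec hk hh hhk m, muC]
  push_cast
  ring

lemma seg_values (hk : 0 < k) (hh : 0 < h) (hhk : h < k) (S : ZMod n → ZMod 2)
    {f : ZMod n → ℂ} (hf : Aop n S f = muC k h • f) {p : ZMod n} (hp : S (p - 1) = 1) :
    ∀ m, m < segLen n S p → f (p + (m : ℕ)) = f p * ((useq k h m : ℝ) : ℂ) := by
  intro m
  induction m using Nat.strong_induction_on with
  | _ m ih =>
    intro hm
    match m with
    | 0 =>
      rw [useq_zero' hk hh hhk]
      simp
    | 1 =>
      have hSp : S p = 0 := by
        have := segLen_min n S hp one_pos hm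
        simpa using this
      have := eigen_01 n hf hSp hp
      rw [useq_one_c hk hh hhk]
      push_cast
      rw [this]
      ring
    | (m+2) =>
      have h1 : S (p + ((m+1:ℕ) : ZMod n) - 1) = 0 :=
        segLen_min n S hp (Nat.succ_pos m) (by omega)
      have h2 : S (p + ((m+2:ℕ) : ZMod n) - 1) = 0 :=
        segLen_min n S hp (by omega) hm
      set x := p + ((m+1:ℕ) : ZMod n) with hx
      have hx1 : S x = 0 := by
        rw [show x = p + ((m+2:ℕ) : ZMod n) - 1 by rw [hx]; push_cast; ring]
        exact h2
      have hx2 : S (x - 1) = 0 := by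
        rw [show x - 1 = p + ((m+1:ℕ) : ZMod n) - 1 by rw [hx]]
        exact h1
      have heq := eigen_00 n hf hx1 hx2
      have e1 : x + 1 = p + ((m+2:ℕ) : ZMod n) := by rw [hx]; push_cast; ring
      have e2 : x - 1 = p + ((m:ℕ) : ZMod n) := by rw [hx]; push_cast; ring
      rw [e1, e2] at heq
      rw [ih (m+1) (by omega) (by omega), ih m (by omega) (by omega)] at heq
      have : f (p + ((m+2:ℕ) : ZMod n)) = 2 * muC k h * (f p * ((useq k h (m+1) : ℝ) : ℂ))
          - f p * ((useq k h m : ℝ) : ℂ) := by linear_combination heq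
      rw [this, useq_rec_c hk hh hhk m]
      ring

lemma seg_boundary (hk : 0 < k) (hh : 0 < h) (hhk : h < k) (S : ZMod n → ZMod 2)
    {f : ZMod n → ℂ} (hf : Aop n S f = muC k h • f) {p : ZMod n} (hp : S (p - 1) = 1) :
    f p * ((useq k h (segLen n S p) : ℝ) : ℂ) = 0 := by
  have hL1 := segLen_pos n S hp
  have hspec := segLen_spec n S hp
  rcases hLc : segLen n S p with _ | L1
  · rw [hLc] at hL1; omega
  rcases L1 with _ | L'
  · rw [hLc] at hspec
    simp only [Nat.zero_add] at hspec ⊢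
    have hSp : S p = 1 := by simpa using hspec
    have := eigen_11 n hf hSp hp
    rw [useq_one_c hk hh hhk]
    linear_combination 2 * this
  · show f p * ((useq k h (L'+2) : ℝ) : ℂ) = 0
    rw [hLc] at hspec
    have hspec' : S (p + ((L'+2:ℕ) : ZMod n) - 1) = 1 := hspec
    have h1 : S (p + ((L'+1:ℕ) : ZMod n) - 1) = 0 :=
      segLen_min n S hp (Nat.succ_pos L') (by rw [hLc]; omega)
    set x := p + ((L'+1:ℕ) : ZMod n) with hx
    have hx1 : S x = 1 := by
      rw [show x = p + ((L'+2:ℕ) : ZMod n) - 1 by rw [hx]; push_cast; ring]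
      exact hspec'
    have hx2 : S (x - 1) = 0 := by
      rw [show x - 1 = p + ((L'+1:ℕ) : ZMod n) - 1 by rw [hx]]
      exact h1
    have heq := eigen_10 n hf hx1 hx2
    have e2 : x - 1 = p + ((L':ℕ) : ZMod n) := by rw [hx]; push_cast; ring
    rw [e2] at heq
    rw [seg_values n hk hh hhk S hf hp L' (by rw [hLc]; omega),
      seg_values n hk hh hhk S hf hp (L'+1) (by rw [hLc]; omega)] at heq
    rw [useq_rec_c hk hh hhk L']
    linear_combination -heq

lemma ker_vanish (hk : 0 < k) (hh : 0 < h) (hhk : h < k) (hcop : Nat.gcd h k = 1)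
    (S : ZMod n → ZMod 2) (hS : S ≠ 0) {f : ZMod n → ℂ} (hf : Aop n S f = muC k h • f)
    (h0 : ∀ p, S (p - 1) = 1 → k ∣ segLen n S p + 1 → f p = 0) : f = 0 := by
  funext x
  obtain ⟨p, m, hp, hm, rfl⟩ := exists_start n S hS x
  show f _ = 0
  rw [seg_values n hk hh hhk S hf hp m hm]
  suffices hfp : f p = 0 by rw [hfp]; ring
  by_cases hdvd : k ∣ segLen n S p + 1
  · exact h0 p hp hdvd
  · have hb := seg_boundary n hk hh hhk S hf hp
    have hu : (useq k h (segLen n S p)) ≠ 0 := by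
      rw [Ne, useq_eq_zero_iff hk hh hhk hcop]
      exact hdvd
    exact (mul_eq_zero.mp hb).resolve_right (Complex.ofReal_ne_zero.mpr hu)

end Eigen

section SegVec

variable {k h : ℕ}

def segVec (k h : ℕ) (S : ZMod n → ZMod 2) (p : ZMod n) : ZMod n → ℂ :=
  fun x => if (x - p).val < segLen n S p then ((useq k h ((x - p).val) : ℝ) : ℂ) else 0

lemma segVec_at (S : ZMod n → ZMod 2) (p : ZMod n) (m : ℕ) (hm : m < n) :
    segVec n k h S p (p + (m : ℕ)) = if m < segLen n S p then ((useq k h m : ℝ) : ℂ) else 0 := by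
  rw [segVec, add_sub_cancel_left, ZMod.val_cast_of_lt hm]

lemma segVec_eigen (hn : 3 ≤ n) (hk3 : 3 ≤ k) (hh : 0 < h) (hhk : h < k)
    (hcop : Nat.gcd h k = 1) (S : ZMod n → ZMod 2) (p : ZMod n)
    (hp : S (p - 1) = 1) (hgood : k ∣ segLen n S p + 1) :
    Aop n S (segVec n k h S p) = muC k h • segVec n k h S p := by
  have hL1 := segLen_pos n S hp
  have hLn := segLen_le n S hp
  have hL2 : 2 ≤ segLen n S p := by
    obtain ⟨c, hc⟩ := hgood
    have hc1 : 1 ≤ c := by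
      rcases Nat.eq_zero_or_pos c with rfl | hcp
      · rw [Nat.mul_zero] at hc; omega
      · exact hcp
    have hkc : k ≤ k * c := Nat.le_mul_of_pos_right k hc1
    omega
  have huL : useq k h (segLen n S p) = 0 := by
    rw [useq_eq_zero_iff (by omega) hh hhk hcop]
    exact hgood
  funext x
  show (1/4:ℂ) * ((1 + sgn (S x)) * segVec n k h S p (x+1)
      + (1 + sgn (S (x-1))) * segVec n k h S p (x-1)) = muC k h * segVec n k h S p x
  by_cases hxp : x = p
  · -- x = p : start of the segment
    rw [hxp]
    have hSp0 : S p = 0 := by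
      have := segLen_min n S hp one_pos hL2
      simpa using this
    rw [sgn_coeff_one hp, sgn_coeff_zero hSp0]
    have hva : segVec n k h S p (p + 1) = ((useq k h 1 : ℝ) : ℂ) := by
      rw [show p + 1 = p + ((1:ℕ) : ZMod n) from by push_cast; ring,
        segVec_at n S p 1 (by omega), if_pos (by omega : 1 < segLen n S p)]
    have hvb : segVec n k h S p p = ((useq k h 0 : ℝ) : ℂ) := by
      rw [segVec, sub_self, ZMod.val_zero, if_pos hL1]
    rw [hva, hvb, useq_one_c (by omega) hh hhk, useq_zero' (by omega) hh hhk]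
    push_cast
    ring
  · have hd0 : 0 < (x - p).val := by
      rcases Nat.eq_zero_or_pos (x - p).val with h0 | h0
      · exfalso
        apply hxp
        have : x - p = 0 := by
          have := zcast_val n (x - p)
          rw [h0] at this
          simpa using this.symm
        have := sub_eq_zero.mp this
        exact this
      · exact h0
    obtain ⟨e, he⟩ : ∃ e, (x - p).val = e + 1 := ⟨(x - p).val - 1, by omega⟩
    have hdn : (x - p).val < n := ZMod.val_lt _
    have hxe : x = p + ((e+1 : ℕ) : ZMod n) := by
      have := zcast_val n (x - p)
      rw [he] at this
      linear_combination -this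
    by_cases hdL : e + 1 < segLen n S p
    · -- interior or right boundary
      have hvx : segVec n k h S p x = ((useq k h (e+1) : ℝ) : ℂ) := by
        rw [hxe, segVec_at n S p (e+1) (by omega), if_pos hdL]
      have hSx1 : S (x - 1) = 0 := by
        rw [show x - 1 = p + ((e+1:ℕ) : ZMod n) - 1 from by rw [hxe]]
        exact segLen_min n S hp (by omega) hdL
      have hvxm : segVec n k h S p (x - 1) = ((useq k h e : ℝ) : ℂ) := by
        rw [show x - 1 = p + ((e:ℕ) : ZMod n) from by rw [hxe]; push_cast; ring,
          segVec_at n S p e (by omega), if_pos (by omega)]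
      by_cases hdR : e + 2 = segLen n S p
      · -- right boundary
        have hSx : S x = 1 := by
          have := segLen_spec n S hp
          rw [show p + ((segLen n S p : ℕ) : ZMod n) - 1 = p + ((e+1 : ℕ) : ZMod n) from by
            rw [← hdR]; push_cast; ring, ← hxe] at this
          exact this
        rw [sgn_coeff_one hSx, sgn_coeff_zero hSx1, hvx, hvxm]
        have hrec := useq_rec_c (k := k) (h := h) (by omega) hh hhk e
        rw [show e + 2 = segLen n S p from hdR, huL] at hrec
        push_cast at hrec
        linear_combination ((1:ℂ)/2) * hrec
      · -- interior
        have hSx : S x = 0 := by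
          rw [show x = p + ((e+2:ℕ) : ZMod n) - 1 from by rw [hxe]; push_cast; ring]
          exact segLen_min n S hp (by omega) (by omega)
        have hvxp : segVec n k h S p (x + 1) = ((useq k h (e+2) : ℝ) : ℂ) := by
          rw [show x + 1 = p + ((e+2:ℕ) : ZMod n) from by rw [hxe]; push_cast; ring,
            segVec_at n S p (e+2) (by omega), if_pos (by omega)]
        rw [sgn_coeff_zero hSx, sgn_coeff_zero hSx1, hvx, hvxm, hvxp]
        have hrec := useq_rec_c (k := k) (h := h) (by omega) hh hhk e
        linear_combination ((1:ℂ)/2) * hrec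
    · -- outside the segment
      have hvx : segVec n k h S p x = 0 := by
        rw [hxe, segVec_at n S p (e+1) (by omega), if_neg hdL]
      rw [hvx, mul_zero]
      have hterm1 : (1 + sgn (S x)) * segVec n k h S p (x+1) = 0 := by
        by_cases hdn1 : e + 2 = n
        · -- x + 1 = p
          have hx1p : x = p - 1 := by
            rw [hxe, show ((e+1:ℕ) : ZMod n) = -1 from by
              have : ((e+2 : ℕ) : ZMod n) = 0 := by rw [hdn1, ZMod.natCast_self]
              push_cast at this ⊢
              linear_combination this]
            ring
          rw [show S x = 1 from by rw [hx1p]; exact hp] at *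
          rw [sgn_coeff_one rfl, zero_mul]
        · have : segVec n k h S p (x + 1) = 0 := by
            rw [show x + 1 = p + ((e+2:ℕ) : ZMod n) from by rw [hxe]; push_cast; ring,
              segVec_at n S p (e+2) (by omega), if_neg (by omega)]
          rw [this, mul_zero]
      have hterm2 : (1 + sgn (S (x-1))) * segVec n k h S p (x-1) = 0 := by
        by_cases hdL2 : e + 1 = segLen n S p
        · -- x - 1 is the last vertex of the segment
          have hSx1 : S (x - 1) = 1 := by
            have := segLen_spec n S hp
            rw [show x - 1 = p + ((segLen n S p : ℕ) : ZMod n) - 1 from by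
              rw [hxe, ← hdL2]]
            exact this
          rw [sgn_coeff_one hSx1, zero_mul]
        · have : segVec n k h S p (x - 1) = 0 := by
            rw [show x - 1 = p + ((e:ℕ) : ZMod n) from by rw [hxe]; push_cast; ring,
              segVec_at n S p e (by omega), if_neg (by omega)]
          rw [this, mul_zero]
      rw [hterm1, hterm2]
      ring

end SegVec

section DimNe

variable {k h : ℕ}

def goodSet (k : ℕ) (S : ZMod n → ZMod 2) : Finset (ZMod n) :=
  Finset.univ.filter (fun p => S (p - 1) = 1 ∧ k ∣ segLen n S p + 1)

def evMap (k h : ℕ) (S : ZMod n → ZMod 2) :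
    (Module.End.eigenspace (Aop n S) (muC k h)) →ₗ[ℂ] (↥(goodSet n k S) → ℂ) where
  toFun f q := f.1 q.1
  map_add' _ _ := rfl
  map_smul' _ _ := rfl

lemma dim_Aop_ne_zero (hn : 3 ≤ n) (hk3 : 3 ≤ k) (hh : 0 < h) (hhk : h < k)
    (hcop : Nat.gcd h k = 1) (S : ZMod n → ZMod 2) (hS : S ≠ 0) :
    finrank ℂ (Module.End.eigenspace (Aop n S) (muC k h)) = (goodSet n k S).card := by
  have hinj : Function.Injective (evMap n k h S) := by
    rw [← LinearMap.ker_eq_bot, eq_bot_iff]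
    rintro ⟨f, hf⟩ hker
    rw [LinearMap.mem_ker] at hker
    rw [Submodule.mem_bot]
    have hfe : Aop n S f = muC k h • f := Module.End.mem_eigenspace_iff.mp hf
    have h0 : ∀ p, S (p - 1) = 1 → k ∣ segLen n S p + 1 → f p = 0 := by
      intro p hp hgood
      have hmem : p ∈ goodSet n k S := by
        rw [goodSet, Finset.mem_filter]
        exact ⟨Finset.mem_univ p, hp, hgood⟩
      exact congrFun hker ⟨p, hmem⟩
    have := ker_vanish n (by omega) hh hhk hcop S hS hfe h0
    exact Subtype.ext this
  have hsurj : Function.Surjective (evMap n k h S) := by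
    rw [← LinearMap.range_eq_top, ← top_le_iff, ← (Pi.basisFun ℂ (↥(goodSet n k S))).span_eq,
      Submodule.span_le]
    rintro v ⟨q, rfl⟩
    obtain ⟨-, hp, hgood⟩ := Finset.mem_filter.mp q.2
    have hL1 := segLen_pos n S hp
    refine ⟨⟨segVec n k h S q.1, ?_⟩, ?_⟩
    · rw [Module.End.mem_eigenspace_iff]
      exact segVec_eigen n hn hk3 hh hhk hcop S q.1 hp hgood
    · rw [Pi.basisFun_apply]
      funext q'
      simp only [evMap, LinearMap.coe_mk, AddHom.coe_mk]
      rw [Pi.single_apply]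
      by_cases hqq : q' = q
      · rw [if_pos hqq, hqq]
        rw [segVec, sub_self, ZMod.val_zero, if_pos hL1,
          useq_zero' (by omega) hh hhk]
        norm_num
      · rw [if_neg hqq]
        obtain ⟨-, hp', hgood'⟩ := Finset.mem_filter.mp q'.2
        have hne : q'.1 ≠ q.1 := fun hc => hqq (Subtype.ext hc)
        have hd0 : 0 < (q'.1 - q.1).val := by
          rcases Nat.eq_zero_or_pos (q'.1 - q.1).val with h0 | h0
          · exfalso
            apply hne
            have := zcast_val n (q'.1 - q.1)
            rw [h0] at this
            have h2 : q'.1 - q.1 = 0 := by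
              rw [← this]
              simp
            exact sub_eq_zero.mp h2
          · exact h0
        rw [segVec]
        by_cases hlt : (q'.1 - q.1).val < segLen n S q.1
        · exfalso
          have hmin := segLen_min n S hp hd0 hlt
          have hrw : q.1 + (((q'.1 - q.1).val : ℕ) : ZMod n) - 1 = q'.1 - 1 := by
            rw [zcast_val]
            ring
          rw [hrw, hp'] at hmin
          exact absurd hmin (by decide)
        · rw [if_neg hlt]
  rw [LinearEquiv.finrank_eq (LinearEquiv.ofBijective (evMap n k h S) ⟨hinj, hsurj⟩),
    Module.finrank_fintype_fun_eq_card, Fintype.card_coe]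

end DimNe

section CycZero

variable {k h : ℕ}

def zC (k h : ℕ) : ℂ := Complex.exp ((((h:ℝ) * Real.pi / k : ℝ) : ℂ) * Complex.I)

lemma zC_ne_zero : zC k h ≠ 0 := Complex.exp_ne_zero _

lemma zC_add_inv (hk : 0 < k) (hh : 0 < h) (hhk : h < k) :
    zC k h + (zC k h)⁻¹ = 2 * muC k h := by
  rw [zC, muC, ← Complex.exp_neg, Complex.ofReal_cos, Complex.cos]
  push_cast
  ring

lemma zC_sq (hk : 0 < k) (hh : 0 < h) (hhk : h < k) :
    (zC k h)^2 = 2 * muC k h * zC k h - 1 := by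
  have h1 := zC_add_inv hk hh hhk
  have h2 : zC k h * (zC k h)⁻¹ = 1 := mul_inv_cancel₀ zC_ne_zero
  linear_combination (zC k h) * h1 - h2

lemma zCinv_sq (hk : 0 < k) (hh : 0 < h) (hhk : h < k) :
    ((zC k h)⁻¹)^2 = 2 * muC k h * (zC k h)⁻¹ - 1 := by
  have h1 := zC_add_inv hk hh hhk
  have h2 : zC k h * (zC k h)⁻¹ = 1 := mul_inv_cancel₀ zC_ne_zero
  linear_combination (zC k h)⁻¹ * h1 - h2

lemma zC_ne_inv (hk : 0 < k) (hh : 0 < h) (hhk : h < k) : zC k h ≠ (zC k h)⁻¹ := by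
  intro hc
  have h2 : (zC k h)^2 = 1 := by
    rw [sq]
    nth_rewrite 2 [hc]
    exact mul_inv_cancel₀ zC_ne_zero
  rw [zC, ← Complex.exp_nat_mul] at h2
  rw [Complex.exp_eq_one_iff] at h2
  obtain ⟨m, hm⟩ := h2
  have hI : ((2:ℂ) * (((h:ℝ) * Real.pi / k : ℝ) : ℂ)) = m * (2 * Real.pi) := by
    apply mul_right_cancel₀ Complex.I_ne_zero
    push_cast at hm ⊢
    linear_combination hm
  have hre : 2 * ((h:ℝ) * Real.pi / k) = m * (2 * Real.pi) := by
    have := hI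
    rw [show ((2:ℂ) * (((h:ℝ) * Real.pi / k : ℝ) : ℂ)) = (((2 * ((h:ℝ) * Real.pi / k) : ℝ)) : ℂ) by push_cast; ring,
      show ((m:ℂ) * (2 * (Real.pi:ℝ)) : ℂ) = (((m * (2 * Real.pi) : ℝ)) : ℂ) by push_cast; ring] at this
    exact_mod_cast this
  have hθpos := theta_pos (h := h) hk hh
  have hθlt := theta_lt (h := h) hk hhk
  have hmpos : 0 < (m:ℝ) := by nlinarith [Real.pi_pos]
  have hmlt : (m:ℝ) < 1 := by nlinarith [Real.pi_pos]
  have : (0:ℤ) < m := by exact_mod_cast hmpos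
  have : (m:ℤ) < 1 := by exact_mod_cast hmlt
  omega

lemma zC_pow_n_eq_one_iff (hk : 0 < k) (n : ℕ) : (zC k h)^n = 1 ↔ 2*k ∣ n*h := by
  rw [zC, ← Complex.exp_nat_mul, Complex.exp_eq_one_iff]
  have hk0 : (k : ℝ) ≠ 0 := by positivity
  constructor
  · rintro ⟨m, hm⟩
    have hI : ((n:ℂ) * (((h:ℝ) * Real.pi / k : ℝ) : ℂ)) = m * (2 * Real.pi) := by
      apply mul_right_cancel₀ Complex.I_ne_zero
      push_cast at hm ⊢
      linear_combination hm
    have hre : (n:ℝ) * ((h:ℝ) * Real.pi / k) = m * (2 * Real.pi) := by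
      rw [show ((n:ℂ) * (((h:ℝ) * Real.pi / k : ℝ) : ℂ)) = (((n * ((h:ℝ) * Real.pi / k) : ℝ)) : ℂ) by push_cast; ring,
        show ((m:ℂ) * (2 * (Real.pi:ℝ)) : ℂ) = (((m * (2 * Real.pi) : ℝ)) : ℂ) by push_cast; ring] at hI
      exact_mod_cast hI
    have hnh : (n:ℝ) * h = 2 * k * m := by
      field_simp at hre
      nlinarith [Real.pi_pos, hre]
    have hz : (n * h : ℤ) = 2 * k * m := by exact_mod_cast hnh
    have : (2 * k : ℤ) ∣ (n * h : ℤ) := ⟨m, by linarith [hz]⟩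
    exact_mod_cast this
  · rintro ⟨t, ht⟩
    refine ⟨t, ?_⟩
    have htr : (n:ℝ) * h = 2 * k * t := by exact_mod_cast ht
    have hre : (n:ℝ) * ((h:ℝ) * Real.pi / k) = (t:ℝ) * (2 * Real.pi) := by
      field_simp
      nlinarith [htr, Real.pi_pos]
    have hC := congrArg (fun r : ℝ => (r : ℂ)) hre
    push_cast at hC ⊢
    linear_combination Complex.I * hC

lemma cyc_rep (hk : 0 < k) (hh : 0 < h) (hhk : h < k)
    {f : ZMod n → ℂ} (hf : Aop n 0 f = muC k h • f) (α β : ℂ)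
    (h0 : α + β = f 0) (h1 : α * zC k h + β * (zC k h)⁻¹ = f 1) :
    ∀ m : ℕ, f ((m:ℕ) : ZMod n) = α * (zC k h)^m + β * ((zC k h)⁻¹)^m := by
  intro m
  induction m using Nat.strong_induction_on with
  | _ m ih =>
    match m with
    | 0 => simpa using h0.symm
    | 1 => simpa using h1.symm
    | (m+2) =>
      have hz : ∀ x : ZMod n, (0 : ZMod n → ZMod 2) x = 0 := fun _ => rfl
      have heq := eigen_00 n hf (x := ((m+1:ℕ) : ZMod n)) (hz _) (hz _)
      rw [show ((m+1:ℕ) : ZMod n) + 1 = ((m+2:ℕ) : ZMod n) by push_cast; ring,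
        show ((m+1:ℕ) : ZMod n) - 1 = ((m:ℕ) : ZMod n) by push_cast; ring] at heq
      rw [ih m (by omega), ih (m+1) (by omega)] at heq
      have hz2 := zC_sq hk hh hhk
      have hw2 := zCinv_sq hk hh hhk
      linear_combination heq - α * (zC k h)^m * hz2 - β * ((zC k h)⁻¹)^m * hw2

lemma dim_cyc_ne (hk : 0 < k) (hh : 0 < h) (hhk : h < k)
    (hzn : (zC k h)^n ≠ 1) :
    finrank ℂ (Module.End.eigenspace (Aop n (0 : ZMod n → ZMod 2)) (muC k h)) = 0 := by
  rw [Submodule.finrank_eq_zero]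
  rw [eq_bot_iff]
  intro f hf
  rw [Module.End.mem_eigenspace_iff] at hf
  rw [Submodule.mem_bot]
  set z := zC k h with hzdef
  have hzw : z - z⁻¹ ≠ 0 := sub_ne_zero.mpr (zC_ne_inv hk hh hhk)
  set α := (f 1 - f 0 * z⁻¹) / (z - z⁻¹) with hα
  set β := f 0 - α with hβ
  have h0 : α + β = f 0 := by rw [hβ]; ring
  have hαz : α * (z - z⁻¹) = f 1 - f 0 * z⁻¹ := by
    rw [hα, div_mul_cancel₀ _ hzw]
  have h1 : α * z + β * z⁻¹ = f 1 := by
    rw [hβ]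
    linear_combination hαz
  have hrep := cyc_rep n hk hh hhk hf α β h0 h1
  have hcast : ∀ m₁ m₂ : ℕ, ((m₁ : ℕ) : ZMod n) = ((m₂ : ℕ) : ZMod n) →
      α * z^m₁ + β * (z⁻¹)^m₁ = α * z^m₂ + β * (z⁻¹)^m₂ := by
    intro m₁ m₂ hm
    rw [← hrep m₁, ← hrep m₂, hm]
  have hn0 : ((n:ℕ) : ZMod n) = ((0:ℕ) : ZMod n) := by
    rw [ZMod.natCast_self]; norm_num
  have hn1 : ((n+1:ℕ) : ZMod n) = ((1:ℕ) : ZMod n) := by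
    push_cast [ZMod.natCast_self]; ring
  have e1 := hcast n 0 hn0
  have e2 := hcast (n+1) 1 hn1
  simp only [pow_zero, pow_one] at e1 e2
  -- A = α (z^n - 1), B = β ((z⁻¹)^n - 1) satisfy A + B = 0, A z + B z⁻¹ = 0
  have eA : α * (z^n - 1) * (z - z⁻¹) = 0 := by
    linear_combination e2 - z⁻¹ * e1
  have hA : α * (z^n - 1) = 0 := (mul_eq_zero.mp eA).resolve_right hzw
  have hα0 : α = 0 := (mul_eq_zero.mp hA).resolve_right (sub_ne_zero.mpr hzn)
  have hB : β * ((z⁻¹)^n - 1) = 0 := by linear_combination e1 - hA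
  have hzinvn : (z⁻¹)^n ≠ 1 := by
    rw [inv_pow]
    intro hc
    exact hzn (by rwa [inv_eq_one] at hc)
  have hβ0 : β = 0 := (mul_eq_zero.mp hB).resolve_right (sub_ne_zero.mpr hzinvn)
  funext x
  have hx := hrep x.val
  rw [zcast_val n x] at hx
  rw [hx, hα0, hβ0]
  simp

lemma cyc_vec_eigen (hn : 3 ≤ n) (hk : 0 < k) (hh : 0 < h) (hhk : h < k)
    {c : ℂ} (hc0 : c ≠ 0) (hcn : c^n = 1) (hsum : c + c⁻¹ = 2 * muC k h) :
    Aop n (0 : ZMod n → ZMod 2) (fun x : ZMod n => c^(x.val))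
      = muC k h • (fun x : ZMod n => c^(x.val)) := by
  haveI : Fact (1 < n) := ⟨by omega⟩
  have hshift : ∀ x : ZMod n, c^((x+1).val) = c * c^(x.val) := by
    intro x
    rw [ZMod.val_add, ZMod.val_one, ← pow_eq_pow_mod _ hcn, pow_succ]
    ring
  have hshift' : ∀ x : ZMod n, c^((x-1).val) = c⁻¹ * c^(x.val) := by
    intro x
    have := hshift (x - 1)
    rw [sub_add_cancel] at this
    rw [this]
    field_simp
  funext x
  show (1/4:ℂ) * ((1 + sgn ((0 : ZMod n → ZMod 2) x)) * c^((x+1).val)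
      + (1 + sgn ((0 : ZMod n → ZMod 2) (x-1))) * c^((x-1).val)) = muC k h * c^(x.val)
  rw [sgn_coeff_zero (show (0 : ZMod n → ZMod 2) x = 0 from rfl),
    sgn_coeff_zero (show (0 : ZMod n → ZMod 2) (x-1) = 0 from rfl), hshift, hshift']
  linear_combination (1/2 : ℂ) * c^(x.val) * hsum

lemma dim_cyc_eq (hn : 3 ≤ n) (hk : 0 < k) (hh : 0 < h) (hhk : h < k)
    (hzn : (zC k h)^n = 1) :
    finrank ℂ (Module.End.eigenspace (Aop n (0 : ZMod n → ZMod 2)) (muC k h)) = 2 := by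
  haveI : Fact (1 < n) := ⟨by omega⟩
  set z := zC k h with hzdef
  have hzw : z - z⁻¹ ≠ 0 := sub_ne_zero.mpr (zC_ne_inv hk hh hhk)
  apply le_antisymm
  · -- upper bound 2 via f ↦ (f 0, f 1)
    have hinj : Function.Injective
        (LinearMap.prod
          ((LinearMap.proj (0 : ZMod n)).comp
            (Submodule.subtype (Module.End.eigenspace (Aop n (0 : ZMod n → ZMod 2)) (muC k h))))
          ((LinearMap.proj (1 : ZMod n)).comp
            (Submodule.subtype (Module.End.eigenspace (Aop n (0 : ZMod n → ZMod 2)) (muC k h))))) := by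
      rw [← LinearMap.ker_eq_bot, eq_bot_iff]
      rintro ⟨f, hf⟩ hker
      rw [LinearMap.mem_ker, LinearMap.prod_apply] at hker
      have h00 : f 0 = 0 := congrArg Prod.fst hker
      have h11 : f 1 = 0 := congrArg Prod.snd hker
      rw [Submodule.mem_bot]
      rw [Module.End.mem_eigenspace_iff] at hf
      apply Subtype.ext
      show f = 0
      set α := (f 1 - f 0 * z⁻¹) / (z - z⁻¹) with hα
      set β := f 0 - α with hβ
      have hαz : α * (z - z⁻¹) = f 1 - f 0 * z⁻¹ := by
        rw [hα, div_mul_cancel₀ _ hzw]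
      have h0 : α + β = f 0 := by rw [hβ]; ring
      have h1 : α * z + β * z⁻¹ = f 1 := by
        rw [hβ]
        linear_combination hαz
      have hα0 : α = 0 := by
        rw [hα, h00, h11]
        simp
      have hβ0 : β = 0 := by rw [hβ, hα0, h00]; ring
      have hrep := cyc_rep n hk hh hhk hf α β h0 h1
      funext x
      have hx := hrep x.val
      rw [zcast_val n x] at hx
      rw [hx, hα0, hβ0]
      simp
    calc finrank ℂ (Module.End.eigenspace (Aop n (0 : ZMod n → ZMod 2)) (muC k h))
        ≤ finrank ℂ (ℂ × ℂ) := LinearMap.finrank_le_finrank_of_injective hinj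
      _ = 2 := by simp [Module.finrank_prod]
  · -- lower bound: two independent eigenvectors
    have hsum : z + z⁻¹ = 2 * muC k h := zC_add_inv hk hh hhk
    have hsum' : z⁻¹ + (z⁻¹)⁻¹ = 2 * muC k h := by rw [inv_inv, add_comm]; exact hsum
    have hzinvn : (z⁻¹)^n = 1 := by rw [inv_pow, hzn, inv_one]
    have hg1 : Aop n (0 : ZMod n → ZMod 2) (fun x : ZMod n => z^(x.val))
        = muC k h • (fun x : ZMod n => z^(x.val)) :=
      cyc_vec_eigen n hn hk hh hhk zC_ne_zero hzn hsum
    have hg2 : Aop n (0 : ZMod n → ZMod 2) (fun x : ZMod n => (z⁻¹)^(x.val))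
        = muC k h • (fun x : ZMod n => (z⁻¹)^(x.val)) :=
      cyc_vec_eigen n hn hk hh hhk (inv_ne_zero zC_ne_zero) hzinvn hsum'
    set E := Module.End.eigenspace (Aop n (0 : ZMod n → ZMod 2)) (muC k h) with hE
    have hv1 : (fun x : ZMod n => z^(x.val)) ∈ E := Module.End.mem_eigenspace_iff.mpr hg1
    have hv2 : (fun x : ZMod n => (z⁻¹)^(x.val)) ∈ E := Module.End.mem_eigenspace_iff.mpr hg2
    have hli : LinearIndependent ℂ
        (![(⟨_, hv1⟩ : E), (⟨_, hv2⟩ : E)]) := by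
      apply LinearIndependent.of_comp E.subtype
      have hcomp : (E.subtype ∘ ![(⟨_, hv1⟩ : E), (⟨_, hv2⟩ : E)])
          = ![fun x : ZMod n => z^(x.val), fun x : ZMod n => (z⁻¹)^(x.val)] := by
        funext i
        fin_cases i <;> rfl
      rw [hcomp, LinearIndependent.pair_iff]
      intro s t hst
      have hst0 := congrFun hst (0 : ZMod n)
      have hst1 := congrFun hst (1 : ZMod n)
      simp only [Pi.add_apply, Pi.smul_apply, smul_eq_mul, Pi.zero_apply, ZMod.val_zero,
        ZMod.val_one, pow_zero, pow_one, mul_one] at hst0 hst1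
      have hs : s * (z - z⁻¹) = 0 := by linear_combination hst1 - z⁻¹ * hst0
      have hs0 : s = 0 := (mul_eq_zero.mp hs).resolve_right hzw
      refine ⟨hs0, ?_⟩
      rw [hs0] at hst0
      simpa using hst0
    have := hli.fintype_card_le_finrank
    simpa using this

end CycZero

section Counting

lemma count_prescribed (C : Finset (ZMod n)) (v : ZMod n → ZMod 2) :
    (Finset.univ.filter (fun S : ZMod n → ZMod 2 => ∀ x ∈ C, S x = v x)).card
      = 2 ^ (n - C.card) := by
  classical
  rw [← Fintype.card_subtype]
  have e : {S : ZMod n → ZMod 2 // ∀ x ∈ C, S x = v x} ≃ (↥(Cᶜ) → ZMod 2) :=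
    { toFun := fun S x => S.1 x.1
      invFun := fun g =>
        ⟨fun x => if hx : x ∈ C then v x else g ⟨x, by simp [hx]⟩,
          fun x hx => dif_pos hx⟩
      left_inv := fun S => by
        apply Subtype.ext
        funext x
        by_cases hx : x ∈ C
        · simp only [dif_pos hx]
          exact (S.2 x hx).symm
        · simp only [dif_neg hx]
      right_inv := fun g => by
        funext x
        have hx : ¬ (x.1 ∈ C) := Finset.mem_compl.mp x.2
        simp only [dif_neg hx] }
  rw [Fintype.card_congr e, Fintype.card_fun, Fintype.card_coe, Finset.card_compl,
    ZMod.card n, ZMod.card 2]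

lemma cast_ne_helper {m ℓ : ℕ} (h1 : 1 ≤ m) (h2 : m < ℓ) (hℓn : ℓ ≤ n) :
    ((m:ℕ) : ZMod n) ≠ 0 ∧ ((m:ℕ) : ZMod n) ≠ ((ℓ:ℕ) : ZMod n) := by
  constructor
  · intro hc
    rw [ZMod.natCast_eq_zero_iff] at hc
    have := Nat.le_of_dvd (by omega) hc
    omega
  · intro hc
    rw [ZMod.natCast_eq_natCast_iff] at hc
    rw [Nat.modEq_iff_dvd' (by omega)] at hc
    have := Nat.le_of_dvd (by omega) hc
    omega

lemma segLen_eq_iff {p : ZMod n} {ℓ : ℕ} (hℓ1 : 1 ≤ ℓ) (S : ZMod n → ZMod 2)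
    (hp : S (p-1) = 1) :
    segLen n S p = ℓ ↔ (S (p + (ℓ:ℕ) - 1) = 1 ∧ ∀ m, 1 ≤ m → m < ℓ → S (p + (m:ℕ) - 1) = 0) := by
  constructor
  · rintro rfl
    exact ⟨segLen_spec n S hp, fun m h1 h2 => segLen_min n S hp h1 h2⟩
  · rintro ⟨hspec, hmin⟩
    have hex := segLen_exists n S hp
    rw [segLen_eq_find n S hex]
    apply le_antisymm
    · exact Nat.find_le ⟨by omega, hspec⟩
    · by_contra hc
      push_neg at hc
      have hfs := Nat.find_spec hex
      exact absurd (hmin _ hfs.1 hc) (by rw [hfs.2]; decide)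

lemma count_fiber (hn : 3 ≤ n) (p : ZMod n) (ℓ : ℕ) (hℓ1 : 1 ≤ ℓ) (hℓn : ℓ ≤ n) :
    (Finset.univ.filter
        (fun S : ZMod n → ZMod 2 => S (p-1) = 1 ∧ segLen n S p = ℓ)).card
      = if ℓ = n then 1 else 2^(n-1-ℓ) := by
  classical
  set C : Finset (ZMod n) := Finset.image (fun m : ℕ => p + (m:ℕ) - 1) (Finset.range (ℓ+1))
    with hC
  set v : ZMod n → ZMod 2 :=
    fun x => if x = p - 1 ∨ x = p + (ℓ:ℕ) - 1 then 1 else 0 with hv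
  have hv1 : v (p - 1) = 1 := if_pos (Or.inl rfl)
  have hv2 : v (p + (ℓ:ℕ) - 1) = 1 := if_pos (Or.inr rfl)
  have hv0 : ∀ m, 1 ≤ m → m < ℓ → v (p + (m:ℕ) - 1) = 0 := by
    intro m h1 h2
    obtain ⟨hne0, hneℓ⟩ := cast_ne_helper n h1 h2 hℓn
    apply if_neg
    rintro (hc | hc)
    · exact hne0 (by linear_combination hc)
    · exact hneℓ (by linear_combination hc)
  have hmem : ∀ m, m ≤ ℓ → p + (m:ℕ) - 1 ∈ C := by
    intro m hm
    rw [hC]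
    exact Finset.mem_image.mpr ⟨m, Finset.mem_range.mpr (by omega), rfl⟩
  have claim1 : ∀ S : ZMod n → ZMod 2,
      (S (p-1) = 1 ∧ segLen n S p = ℓ) ↔ (∀ x ∈ C, S x = v x) := by
    intro S
    constructor
    · rintro ⟨h1, h2⟩
      rw [segLen_eq_iff n hℓ1 S h1] at h2
      obtain ⟨hspec, hmin⟩ := h2
      intro x hx
      rw [hC] at hx
      obtain ⟨m, hm, rfl⟩ := Finset.mem_image.mp hx
      rw [Finset.mem_range] at hm
      rcases Nat.eq_zero_or_pos m with rfl | hm1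
      · rw [show p + ((0:ℕ):ZMod n) - 1 = p - 1 by push_cast; ring, hv1]
        exact h1
      rcases Nat.lt_or_ge m ℓ with hmℓ | hmℓ
      · rw [hv0 m hm1 hmℓ]
        exact hmin m hm1 hmℓ
      · have : m = ℓ := by omega
        subst this
        rw [hv2]
        exact hspec
    · intro hall
      have h1 : S (p - 1) = 1 := by
        have := hall _ (by
          have := hmem 0 (by omega)
          rwa [show p + ((0:ℕ):ZMod n) - 1 = p - 1 by push_cast; ring] at this)
        rwa [hv1] at this
      refine ⟨h1, ?_⟩
      rw [segLen_eq_iff n hℓ1 S h1]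
      constructor
      · have := hall _ (hmem ℓ le_rfl)
        rwa [hv2] at this
      · intro m hm1 hm2
        have := hall _ (hmem m (by omega))
        rwa [hv0 m hm1 hm2] at this
  rw [Finset.filter_congr (fun S _ => claim1 S), count_prescribed]
  by_cases hcase : ℓ = n
  · subst hcase
    have hCuniv : C = Finset.univ := by
      apply Finset.eq_univ_iff_forall.mpr
      intro x
      rw [hC]
      refine Finset.mem_image.mpr ⟨(x + 1 - p).val, Finset.mem_range.mpr ?_, ?_⟩
      · have := ZMod.val_lt (x + 1 - p)
        omega
      · rw [zcast_val]
        ring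
    rw [if_pos rfl, hCuniv, Finset.card_univ, ZMod.card, Nat.sub_self, pow_zero]
  · have hinj : Set.InjOn (fun m : ℕ => p + (m:ℕ) - 1) ↑(Finset.range (ℓ+1)) := by
      intro a ha b hb hab
      simp only [Finset.coe_range, Set.mem_Iio] at ha hb
      have hcast : ((a:ℕ) : ZMod n) = ((b:ℕ) : ZMod n) := by
        linear_combination hab
      rw [ZMod.natCast_eq_natCast_iff] at hcast
      rcases le_total a b with hle | hle
      · rw [Nat.modEq_iff_dvd' hle] at hcast
        rcases Nat.eq_zero_or_pos (b - a) with h0 | h0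
        · omega
        · have := Nat.le_of_dvd h0 hcast
          omega
      · rw [Nat.ModEq.comm, Nat.modEq_iff_dvd' hle] at hcast
        rcases Nat.eq_zero_or_pos (a - b) with h0 | h0
        · omega
        · have := Nat.le_of_dvd h0 hcast
          omega
    rw [if_neg hcase, hC, Finset.card_image_of_injOn hinj, Finset.card_range,
      show n - (ℓ+1) = n-1-ℓ by omega]

end Counting

section Total

variable {k h : ℕ}

lemma sum_goodSet (hn : 3 ≤ n) (hk3 : 3 ≤ k) :
    ∑ S : ZMod n → ZMod 2, (goodSet n k S).card
      = n * ∑ ℓ ∈ Finset.Icc 1 n,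
          (if k ∣ ℓ + 1 then (if ℓ = n then 1 else 2^(n-1-ℓ)) else 0) := by
  classical
  have hswap : ∑ S : ZMod n → ZMod 2, (goodSet n k S).card
      = ∑ p : ZMod n, (Finset.univ.filter
          (fun S : ZMod n → ZMod 2 => S (p-1) = 1 ∧ k ∣ segLen n S p + 1)).card := by
    simp only [goodSet, Finset.card_filter]
    exact Finset.sum_comm
  rw [hswap]
  have hper : ∀ p : ZMod n, (Finset.univ.filter
      (fun S : ZMod n → ZMod 2 => S (p-1) = 1 ∧ k ∣ segLen n S p + 1)).card
        = ∑ ℓ ∈ Finset.Icc 1 n,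
            (if k ∣ ℓ + 1 then (if ℓ = n then 1 else 2^(n-1-ℓ)) else 0) := by
    intro p
    have hmap : ∀ S ∈ Finset.univ.filter
        (fun S : ZMod n → ZMod 2 => S (p-1) = 1 ∧ k ∣ segLen n S p + 1),
        segLen n S p ∈ (Finset.Icc 1 n).filter (fun ℓ => k ∣ ℓ + 1) := by
      intro S hS
      rw [Finset.mem_filter] at hS ⊢
      obtain ⟨-, hp, hdvd⟩ := hS
      exact ⟨Finset.mem_Icc.mpr ⟨segLen_pos n S hp, segLen_le n S hp⟩, hdvd⟩
    rw [Finset.card_eq_sum_card_fiberwise hmap, Finset.sum_filter]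
    apply Finset.sum_congr rfl
    intro ℓ hℓ
    rw [Finset.mem_Icc] at hℓ
    by_cases hdvd : k ∣ ℓ + 1
    · rw [if_pos hdvd, if_pos hdvd]
      have heq : (Finset.univ.filter
          (fun S : ZMod n → ZMod 2 => S (p-1) = 1 ∧ k ∣ segLen n S p + 1)).filter
            (fun S => segLen n S p = ℓ)
          = Finset.univ.filter (fun S : ZMod n → ZMod 2 => S (p-1) = 1 ∧ segLen n S p = ℓ) := by
        rw [Finset.filter_filter]
        apply Finset.filter_congr
        intro S _
        constructor
        · rintro ⟨⟨hp, -⟩, hℓeq⟩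
          exact ⟨hp, hℓeq⟩
        · rintro ⟨hp, hℓeq⟩
          exact ⟨⟨hp, by rw [hℓeq]; exact hdvd⟩, hℓeq⟩
      rw [heq, count_fiber n hn p ℓ hℓ.1 hℓ.2]
    · rw [if_neg hdvd, if_neg hdvd]
  rw [Finset.sum_congr rfl (fun p _ => hper p), Finset.sum_const, Finset.card_univ,
    ZMod.card, smul_eq_mul]

lemma goodSet_zero : goodSet n k (0 : ZMod n → ZMod 2) = ∅ := by
  ext p
  simp [goodSet]

lemma total_dim (hn : 3 ≤ n) (hk3 : 3 ≤ k) (hh : 0 < h) (hhk : h < k)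
    (hcop : Nat.gcd h k = 1) :
    finrank ℂ (Module.End.eigenspace (cycLampM n) (muC k h))
      = (if (2*k) ∣ (n*h) then 2 else 0)
        + n * ∑ ℓ ∈ Finset.Icc 1 n,
            (if k ∣ ℓ + 1 then (if ℓ = n then 1 else 2^(n-1-ℓ)) else 0) := by
  classical
  have hk : 0 < k := by omega
  rw [eigen_decomp n (muC k h)]
  rw [Finset.sum_eq_sum_sdiff_singleton_add (Finset.mem_univ (0 : ZMod n → ZMod 2))]
  have h1 : ∀ S ∈ (Finset.univ \ {(0 : ZMod n → ZMod 2)}),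
      finrank ℂ (Module.End.eigenspace (Aop n S) (muC k h)) = (goodSet n k S).card := by
    intro S hS
    rw [Finset.mem_sdiff, Finset.mem_singleton] at hS
    exact dim_Aop_ne_zero n hn hk3 hh hhk hcop S hS.2
  rw [Finset.sum_congr rfl h1]
  have h2 : finrank ℂ (Module.End.eigenspace (Aop n (0 : ZMod n → ZMod 2)) (muC k h))
      = if (2*k) ∣ (n*h) then 2 else 0 := by
    by_cases hz : (zC k h)^n = 1
    · rw [if_pos ((zC_pow_n_eq_one_iff hk n).mp hz), dim_cyc_eq n hn hk hh hhk hz]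
    · rw [if_neg (fun hd => hz ((zC_pow_n_eq_one_iff hk n).mpr hd)),
        dim_cyc_ne n hk hh hhk hz]
  rw [h2]
  have h3 : ∑ S ∈ Finset.univ \ {(0 : ZMod n → ZMod 2)}, (goodSet n k S).card
      = ∑ S : ZMod n → ZMod 2, (goodSet n k S).card := by
    rw [Finset.sum_eq_sum_sdiff_singleton_add (Finset.mem_univ (0 : ZMod n → ZMod 2))
      (fun S => (goodSet n k S).card)]
    simp [goodSet_zero]
  rw [h3, sum_goodSet n hn hk3]
  ring

end Total

section Arith

variable {k h q r : ℕ}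

lemma T_reindex (hn : 3 ≤ n) (hk3 : 3 ≤ k) :
    (∑ ℓ ∈ Finset.Icc 1 n,
        (if k ∣ ℓ + 1 then (if ℓ = n then 1 else 2^(n-1-ℓ)) else 0))
      = (∑ j ∈ Finset.Icc 1 (n/k), 2^(n - j*k)) + (if k ∣ (n+1) then 1 else 0) := by
  have hk : 0 < k := by omega
  rw [Finset.sum_eq_sum_sdiff_singleton_add (Finset.mem_Icc.mpr ⟨by omega, le_rfl⟩ :
    n ∈ Finset.Icc 1 n)]
  have hlast : (if k ∣ n + 1 then (if n = n then 1 else 2^(n-1-n)) else 0)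
      = (if k ∣ (n+1) then 1 else 0) := by
    simp
  rw [hlast]
  congr 1
  have hset : Finset.Icc 1 n \ {n} = Finset.Icc 1 (n-1) := by
    ext ℓ
    simp only [Finset.mem_sdiff, Finset.mem_Icc, Finset.mem_singleton]
    omega
  rw [hset]
  have hinner : ∀ ℓ ∈ Finset.Icc 1 (n-1),
      (if k ∣ ℓ + 1 then (if ℓ = n then 1 else 2^(n-1-ℓ)) else 0)
        = (if k ∣ ℓ + 1 then 2^(n-1-ℓ) else 0) := by
    intro ℓ hℓ
    rw [Finset.mem_Icc] at hℓ
    rw [if_neg (by omega : ¬ ℓ = n)]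
  rw [Finset.sum_congr rfl hinner, ← Finset.sum_filter]
  refine Finset.sum_nbij' (i := fun ℓ => (ℓ+1)/k) (j := fun j => j*k - 1) ?_ ?_ ?_ ?_ ?_
  · intro ℓ hℓ
    rw [Finset.mem_filter, Finset.mem_Icc] at hℓ
    obtain ⟨⟨h1, h2⟩, c, hc⟩ := hℓ
    rw [Finset.mem_Icc, hc, Nat.mul_div_cancel_left c hk]
    constructor
    · rcases Nat.eq_zero_or_pos c with rfl | hcp
      · omega
      · exact hcp
    · rw [Nat.le_div_iff_mul_le hk]
      have hck : c * k = k * c := Nat.mul_comm c k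
      omega
  · intro j hj
    rw [Finset.mem_Icc] at hj
    obtain ⟨h1, h2⟩ := hj
    have hjk : j * k ≤ n := le_trans (Nat.mul_le_mul_right k h2) (Nat.div_mul_le_self n k)
    rw [Finset.mem_filter, Finset.mem_Icc]
    have hjk1 : k ≤ j * k := Nat.le_mul_of_pos_left k h1
    refine ⟨⟨by omega, by omega⟩, ?_⟩
    rw [show j*k - 1 + 1 = j*k by omega]
    exact Dvd.intro j (mul_comm k j)
  · intro ℓ hℓ
    rw [Finset.mem_filter, Finset.mem_Icc] at hℓ
    obtain ⟨⟨h1, h2⟩, c, hc⟩ := hℓ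
    rw [hc, Nat.mul_div_cancel_left c hk]
    have hck : c * k = k * c := Nat.mul_comm c k
    omega
  · intro j hj
    rw [Finset.mem_Icc] at hj
    have hjk1 : k ≤ j * k := Nat.le_mul_of_pos_left k hj.1
    rw [show j*k - 1 + 1 = j*k by omega, Nat.mul_div_cancel j hk]
  · intro ℓ hℓ
    rw [Finset.mem_filter, Finset.mem_Icc] at hℓ
    obtain ⟨⟨h1, h2⟩, c, hc⟩ := hℓ
    rw [hc, Nat.mul_div_cancel_left c hk]
    congr 1
    have hck : c * k = k * c := Nat.mul_comm c k
    have : 1 ≤ c := by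
      rcases Nat.eq_zero_or_pos c with rfl | hcp
      · omega
      · exact hcp
    omega

lemma geomR (hk1 : 1 ≤ k) :
    ∀ J, J * k ≤ n → ((2:ℝ)^k - 1) * (∑ j ∈ Finset.Icc 1 J, (2:ℝ)^(n - j*k))
      = 2^n - 2^(n - J*k) := by
  intro J
  induction J with
  | zero => simp
  | succ J ih =>
    intro hJ
    have hex : (J+1)*k = J*k + k := by ring
    have hJk : J * k ≤ n := by omega
    rw [Finset.sum_Icc_succ_top (by omega : 1 ≤ J + 1), mul_add, ih hJk]
    rw [show n - J*k = k + (n - (J+1)*k) by omega, pow_add]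
    ring

lemma cond_char (hn : 3 ≤ n) (hk3 : 3 ≤ k) (hkn : k ≤ n + 1) (hh : 0 < h) (hhk : h < k)
    (hcop : Nat.gcd h k = 1) (hqr : n + 1 = k * q + r) (hr : r ≤ k - 1) :
    (2*k ∣ n*h) ↔ (r = 1 ∧ Even (h*q)) := by
  constructor
  · intro hd
    have hkdvd : k ∣ n*h := dvd_trans ⟨2, by ring⟩ hd
    have hkn' : k ∣ n := (Nat.coprime_comm.mp hcop).dvd_of_dvd_mul_right hkdvd
    have hr1 : r = 1 := by
      rcases Nat.eq_zero_or_pos r with rfl | hrp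
      · exfalso
        have h2 : k ∣ n + 1 := ⟨q, by omega⟩
        have h3 : k ∣ (n+1) - n := Nat.dvd_sub h2 hkn'
        rw [show n + 1 - n = 1 by omega] at h3
        have := Nat.le_of_dvd one_pos h3
        omega
      · have h2 : k ∣ k * q := Dvd.intro q rfl
        have h3 : k ∣ n - k*q := Nat.dvd_sub hkn' h2
        have hkq : k * q ≤ n := by omega
        rw [show n - k*q = r - 1 by omega] at h3
        rcases Nat.eq_zero_or_pos (r - 1) with h0 | h0
        · omega
        · have := Nat.le_of_dvd h0 h3
          omega
    refine ⟨hr1, ?_⟩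
    subst hr1
    have hneq : n = k * q := by omega
    obtain ⟨m, hm⟩ := hd
    have h1 : k * (q * h) = k * (2 * m) := by
      rw [show k * (q*h) = (k*q)*h by ring, ← hneq, hm]
      ring
    have hqh : q * h = 2 * m := Nat.eq_of_mul_eq_mul_left (by omega) h1
    exact ⟨m, by rw [mul_comm h q, hqh]; ring⟩
  · rintro ⟨rfl, heven⟩
    have hneq : n = k * q := by omega
    obtain ⟨m, hm⟩ := heven
    exact ⟨m, by rw [hneq, show k*q*h = k*(h*q) by ring, hm]; ring⟩

end Arith

end CycLamp

open CycLamp Module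


/-- Multiplicity of the eigenvalue `cos(hπ/k)` (for `3 ≤ k ≤ n+1`,
`1 ≤ h ≤ k−1`, `gcd(h,k)=1`, `n+1 = kq+r`, `0 ≤ r ≤ k−1`) for the edge lamplighter
random walk on the discrete circle `C_n`. -/
theorem cycle_lamplighter_multiplicity (n k h q r : ℕ) (hn : 3 ≤ n)
    (hk3 : 3 ≤ k) (hkn : k ≤ n + 1) (hh1 : 1 ≤ h) (hhk : h ≤ k - 1)
    (hcop : Nat.gcd h k = 1) (hqr : n + 1 = k * q + r) (hr : r ≤ k - 1) :
    (2 ≤ r →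
      (Module.finrank ℂ (Module.End.eigenspace (cycLampM n)
          (Complex.ofReal (Real.cos (h * Real.pi / k)))) : ℝ)
        = n * ((2 : ℝ) ^ n - 2 ^ (r - 1)) / (2 ^ k - 1))
    ∧ (r = 1 → Odd (h * q) →
      (Module.finrank ℂ (Module.End.eigenspace (cycLampM n)
          (Complex.ofReal (Real.cos (h * Real.pi / k)))) : ℝ)
        = n * ((2 : ℝ) ^ n - 1) / (2 ^ k - 1))
    ∧ (r = 1 → Even (h * q) →
      (Module.finrank ℂ (Module.End.eigenspace (cycLampM n)
          (Complex.ofReal (Real.cos (h * Real.pi / k)))) : ℝ)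
        = n * ((2 : ℝ) ^ n - 1) / (2 ^ k - 1) + 2)
    ∧ (r = 0 →
      (Module.finrank ℂ (Module.End.eigenspace (cycLampM n)
          (Complex.ofReal (Real.cos (h * Real.pi / k)))) : ℝ)
        = n * ((2 : ℝ) ^ n + 2 ^ (k - 1) - 1) / (2 ^ k - 1)) := by
  haveI : NeZero n := ⟨by omega⟩
  have hh : 0 < h := hh1
  have hhk' : h < k := by omega
  have hk : 0 < k := by omega
  have hμ : Complex.ofReal (Real.cos (h * Real.pi / k)) = CycLamp.muC k h := rfl
  have htot := CycLamp.total_dim n hn hk3 hh hhk' hcop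
  have hchar := CycLamp.cond_char n (q := q) (r := r) hn hk3 hkn hh hhk' hcop hqr hr
  have hTre := CycLamp.T_reindex (k := k) n hn hk3
  have hne : ((2:ℝ)^k - 1) ≠ 0 := by
    have : (1:ℝ) < 2^k := one_lt_pow₀ (by norm_num) (by omega)
    intro hc
    nlinarith
  have hqk : q * k = k * q := Nat.mul_comm q k
  refine ⟨?_, ?_, ?_, ?_⟩
  · -- 2 ≤ r
    intro hr2
    have hc0 : (if (2*k) ∣ (n*h) then 2 else 0) = 0 :=
      if_neg (fun hcond => by have := (hchar.mp hcond).1; omega)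
    have hdiv : ¬ (k ∣ n+1) := by
      rintro ⟨c, hc⟩
      have h3 : k ∣ (n+1) - k*q := Nat.dvd_sub ⟨c, hc⟩ (Dvd.intro q rfl)
      rw [show n + 1 - k*q = r by omega] at h3
      have := Nat.le_of_dvd (by omega) h3
      omega
    have hq : n / k = q := by
      rw [show n = k*q + (r-1) by omega, Nat.mul_add_div hk, Nat.div_eq_of_lt (by omega),
        add_zero]
    have hgeom := CycLamp.geomR (k := k) n (by omega) q (by omega)
    rw [show n - q*k = r - 1 by omega] at hgeom
    rw [hμ, htot, hc0, hTre, hq, if_neg hdiv]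
    push_cast
    rw [eq_div_iff hne]
    linear_combination (n:ℝ) * hgeom
  · -- r = 1, odd
    rintro rfl hodd
    have hc0 : (if (2*k) ∣ (n*h) then 2 else 0) = 0 :=
      if_neg (fun hcond => (Nat.not_even_iff_odd.mpr hodd) (hchar.mp hcond).2)
    have hdiv : ¬ (k ∣ n+1) := by
      rintro ⟨c, hc⟩
      have h3 : k ∣ (n+1) - k*q := Nat.dvd_sub ⟨c, hc⟩ (Dvd.intro q rfl)
      rw [show n + 1 - k*q = 1 by omega] at h3
      have := Nat.le_of_dvd (by omega) h3
      omega
    have hq : n / k = q := by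
      rw [show n = k*q + 0 by omega, Nat.mul_add_div hk, Nat.div_eq_of_lt (by omega),
        add_zero]
    have hgeom := CycLamp.geomR (k := k) n (by omega) q (by omega)
    rw [show n - q*k = 0 by omega, pow_zero] at hgeom
    rw [hμ, htot, hc0, hTre, hq, if_neg hdiv]
    push_cast
    rw [eq_div_iff hne]
    linear_combination (n:ℝ) * hgeom
  · -- r = 1, even
    rintro rfl heven
    have hc2 : (if (2*k) ∣ (n*h) then 2 else 0) = 2 :=
      if_pos (hchar.mpr ⟨rfl, heven⟩)
    have hdiv : ¬ (k ∣ n+1) := by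
      rintro ⟨c, hc⟩
      have h3 : k ∣ (n+1) - k*q := Nat.dvd_sub ⟨c, hc⟩ (Dvd.intro q rfl)
      rw [show n + 1 - k*q = 1 by omega] at h3
      have := Nat.le_of_dvd (by omega) h3
      omega
    have hq : n / k = q := by
      rw [show n = k*q + 0 by omega, Nat.mul_add_div hk, Nat.div_eq_of_lt (by omega),
        add_zero]
    have hgeom := CycLamp.geomR (k := k) n (by omega) q (by omega)
    rw [show n - q*k = 0 by omega, pow_zero] at hgeom
    rw [hμ, htot, hc2, hTre, hq, if_neg hdiv]
    push_cast
    rw [div_add' _ _ _ hne, eq_div_iff hne]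
    linear_combination (n:ℝ) * hgeom
  · -- r = 0
    rintro rfl
    have hq1 : 1 ≤ q := by
      rcases Nat.eq_zero_or_pos q with rfl | hqp
      · omega
      · exact hqp
    have hc0 : (if (2*k) ∣ (n*h) then 2 else 0) = 0 :=
      if_neg (fun hcond => by have := (hchar.mp hcond).1; omega)
    have hdivp : k ∣ n+1 := ⟨q, by omega⟩
    have hq : n / k = q - 1 := by
      rw [show n = k*(q-1) + (k-1) by
          have h2 : k*(q-1) = (q-1)*k := Nat.mul_comm _ _
          have h3 : (q-1)*k = q*k - k := by rw [Nat.sub_mul, one_mul]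
          omega,
        Nat.mul_add_div hk, Nat.div_eq_of_lt (by omega), add_zero]
    have hq1k : (q-1)*k ≤ n := by
      have h3 : (q-1)*k = q*k - k := by rw [Nat.sub_mul, one_mul]
      omega
    have hgeom := CycLamp.geomR (k := k) n (by omega) (q-1) hq1k
    rw [show n - (q-1)*k = k - 1 by
        have h3 : (q-1)*k = q*k - k := by rw [Nat.sub_mul, one_mul]
        omega] at hgeom
    have h2k : (2:ℝ)^k = 2^(k-1) * 2 := by
      conv_lhs => rw [show k = (k-1)+1 by omega]
      rw [pow_succ]
    rw [hμ, htot, hc0, hTre, hq, if_pos hdivp]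
    push_cast
    rw [eq_div_iff hne]
    linear_combination (n:ℝ) * hgeom + (n:ℝ) * h2k
end
end

section
/- Let θ ∈ C₂^Z, let S_θ be a set of representatives of the left cosets of G_θ in G with 1_G ∈ S_θ, and let V ⊆ L(X) be a G_θ-invariant subspace. If (ω,g) ∈ C₂≀G, s ∈ S_θ, and gs = th with h ∈ G_θ and t ∈ S_θ, then for every f ∈ sV (the image of V under the action of s): (ω,g)·(χ_{sθ} ⊗ f) = χ_{tθ} ⊗ f′, where f′ = χ_{gsθ}(ω) · (ths^{−1})f and f′ ∈ tV. -/
open Finset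

noncomputable section

/-- The action of `G` on lamp configurations `C₂^Z`: `(gθ)(z) = θ(g⁻¹z)`. -/
def confAct {G : Type*} [Group G] {Z : Type*} [MulAction G Z]
    (g : G) (θ : Z → ZMod 2) : Z → ZMod 2 :=
  fun z => θ (g⁻¹ • z)

/-- The character `χ_θ(ω) = (−1)^{Σ_z θ(z)·ω(z)}` of `C₂^Z`. -/
def confChi {Z : Type*} [Fintype Z] (θ ω : Z → ZMod 2) : ℂ :=
  (-1 : ℂ) ^ (∑ z : Z, (θ z * ω z).val)

/-- The action of `g ∈ G` on `L(X)`: `(gf)(x) = f(g⁻¹x)`, as a linear operator. -/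
def transL {G : Type*} [Group G] {X : Type*} [MulAction G X] (g : G) :
    (X → ℂ) →ₗ[ℂ] (X → ℂ) where
  toFun f := fun x => f (g⁻¹ • x)
  map_add' _ _ := rfl
  map_smul' _ _ := rfl

/-- The action of the element `(ω,g)` of the wreath product `C₂ ≀ G` on
`L(C₂^Z × X)`: `((ω,g)F)(σ,x) = F((ω,g)⁻¹(σ,x)) = F(g⁻¹ω + g⁻¹σ, g⁻¹x)`. -/
def wreathAct {G : Type*} [Group G] {Z : Type*} [MulAction G Z] {X : Type*}
    [MulAction G X] (ω : Z → ZMod 2) (g : G) (F : (Z → ZMod 2) × X → ℂ) :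
    (Z → ZMod 2) × X → ℂ :=
  fun p => F (confAct g⁻¹ ω + confAct g⁻¹ p.1, g⁻¹ • p.2)


lemma confAct_mul {G : Type*} [Group G] {Z : Type*} [MulAction G Z]
    (a b : G) (θ : Z → ZMod 2) : confAct (a * b) θ = confAct a (confAct b θ) := by
  funext z; simp [confAct, mul_smul, mul_inv_rev]

lemma confAct_one {G : Type*} [Group G] {Z : Type*} [MulAction G Z]
    (θ : Z → ZMod 2) : confAct (1 : G) θ = θ := by
  funext z; simp [confAct]

lemma neg_one_pow_val_add (a b : ZMod 2) :
    ((-1 : ℂ)) ^ (a + b).val = (-1 : ℂ) ^ a.val * (-1 : ℂ) ^ b.val := by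
  rcases (by decide : ∀ a : ZMod 2, a = 0 ∨ a = 1) a with rfl | rfl <;>
  rcases (by decide : ∀ a : ZMod 2, a = 0 ∨ a = 1) b with rfl | rfl <;>
    norm_num [show ZMod.val (2:ZMod 2) = 0 by decide, show ZMod.val (1:ZMod 2) = 1 by decide]

lemma confChi_prod {Z : Type*} [Fintype Z] (θ ω : Z → ZMod 2) :
    confChi θ ω = ∏ z : Z, (-1 : ℂ) ^ (θ z * ω z).val := by
  rw [confChi, ← Finset.prod_pow_eq_pow_sum]

lemma confChi_add {Z : Type*} [Fintype Z] (θ α β : Z → ZMod 2) :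
    confChi θ (α + β) = confChi θ α * confChi θ β := by
  rw [confChi_prod, confChi_prod, confChi_prod, ← Finset.prod_mul_distrib]
  refine Finset.prod_congr rfl fun z _ => ?_
  have : θ z * (α + β) z = θ z * α z + θ z * β z := by simp [mul_add]
  rw [this, neg_one_pow_val_add]

lemma confChi_act {G : Type*} [Group G] {Z : Type*} [Fintype Z] [MulAction G Z]
    (g : G) (θ ω : Z → ZMod 2) :
    confChi (confAct g θ) (confAct g ω) = confChi θ ω := by
  unfold confChi confAct
  congr 1
  exact Fintype.sum_bijective (fun z => g⁻¹ • z) (MulAction.bijective g⁻¹) _ _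
    (fun z => by simp)

lemma confChi_inv_act {G : Type*} [Group G] {Z : Type*} [Fintype Z] [MulAction G Z]
    (g : G) (θ ω : Z → ZMod 2) :
    confChi θ (confAct g⁻¹ ω) = confChi (confAct g θ) ω := by
  conv_rhs => rw [← confChi_act g⁻¹, ← confAct_mul, inv_mul_cancel, confAct_one]

/-- Let `S_θ` be a set of representatives of the left cosets of the
stabilizer `G_θ` in `G` with `1 ∈ S_θ`, and let `V ⊆ L(X)` be a `G_θ`-invariant
subspace. If `s ∈ S_θ` and `gs = th` with `h ∈ G_θ`, `t ∈ S_θ`, then for every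
`f ∈ sV`: `(ω,g)·(χ_{sθ} ⊗ f) = χ_{tθ} ⊗ f′` where `f′ = χ_{gsθ}(ω)·(ths⁻¹)f ∈ tV`. -/
theorem wreath_action_coset_translate {G : Type*} [Group G] [Fintype G]
    {Z : Type*} [Fintype Z] [DecidableEq Z] [MulAction G Z]
    {X : Type*} [Fintype X] [MulAction G X] [MulAction.IsPretransitive G X]
    (θ : Z → ZMod 2) (Sθ : Set G) (hone : (1 : G) ∈ Sθ)
    (hreps : ∀ g : G, ∃! s, s ∈ Sθ ∧ confAct (s⁻¹ * g) θ = θ)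
    (V : Submodule ℂ (X → ℂ))
    (hV : ∀ h : G, confAct h θ = θ → ∀ f ∈ V, transL h f ∈ V)
    (ω : Z → ZMod 2) (g s t h : G)
    (hs : s ∈ Sθ) (ht : t ∈ Sθ) (hh : confAct h θ = θ) (hts : g * s = t * h)
    (f : X → ℂ) (hf : f ∈ V.map (transL s)) :
    wreathAct ω g (fun p => confChi (confAct s θ) p.1 * f p.2)
      = (fun p => confChi (confAct t θ) p.1 *
          (confChi (confAct (g * s) θ) ω • transL (t * h * s⁻¹) f) p.2)
    ∧ confChi (confAct (g * s) θ) ω • transL (t * h * s⁻¹) f ∈ V.map (transL t) := by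

  have key : confAct (g * s) θ = confAct t θ := by
    rw [hts, confAct_mul, hh]
  have hg : t * h * s⁻¹ = g := by rw [← hts]; group
  constructor
  · funext p
    show confChi (confAct s θ) (confAct g⁻¹ ω + confAct g⁻¹ p.1) * f (g⁻¹ • p.2) = _
    have h1 : (confChi (confAct (g * s) θ) ω • transL (t * h * s⁻¹) f) p.2
        = confChi (confAct (g * s) θ) ω * f (g⁻¹ • p.2) := by
      simp [transL, hg]
    rw [h1, confChi_add, confChi_inv_act, confChi_inv_act, ← confAct_mul, key]
    ring
  · obtain ⟨f₀, hf₀, rfl⟩ := hf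
    have h2 : transL (t * h * s⁻¹) (transL s f₀) = transL t (transL h f₀) := by
      funext x
      simp [transL, mul_smul, mul_inv_rev]
    rw [h2, ← map_smul]
    exact Submodule.mem_map_of_mem (Submodule.smul_mem _ _ (hV h hh f₀ hf₀))
end
end
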